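/- Let 2 ≤ r < ∞ and let T : X → Y be a bounded linear operator between Banach spaces that is absolutely (r,2)-summing. Then for every n ∈ ℕ, the n-th Weyl number satisfies x_n(T) ≤ n^{−1/r} · π_{r,2}(T). -/

import Mathlib

/-!
If `b < a_n(T A)`, then for every subspace `K` of dimension `< n` the operator `T A (1 - P_K)`
has norm `> b`, because `T A P_K` has rank `< n`; so a greedy Gram–Schmidt construction
produces orthonormal `e₁, …, eₙ` with `‖T A eⱼ‖ > b`. By Bessel's inequality the vectors `A eⱼ`
have weak `ℓ₂`-norm at most `1`, and the `(r,2)`-summing inequality then gives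
`n ^ (1/r) * b ≤ π_{r,2}(T)`.
-/

noncomputable section

open scoped ENNReal

/-- The `n`-th approximation number. -/
def approxNumber {X Y : Type*} [NormedAddCommGroup X] [NormedSpace ℝ X]
    [NormedAddCommGroup Y] [NormedSpace ℝ Y] (n : ℕ) (T : X →L[ℝ] Y) : ℝ :=
  sInf {c : ℝ | ∃ A : X →L[ℝ] Y, FiniteDimensional ℝ (LinearMap.range (A : X →ₗ[ℝ] Y)) ∧
    Module.finrank ℝ (LinearMap.range (A : X →ₗ[ℝ] Y)) < n ∧ ‖T - A‖ = c}

/-- The Hilbert sequence space `ℓ₂`. -/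
abbrev Ell2 : Type := lp (fun _ : ℕ => ℝ) 2

/-- The `n`-th Weyl number. -/
def weylNumber {X Y : Type*} [NormedAddCommGroup X] [NormedSpace ℝ X]
    [NormedAddCommGroup Y] [NormedSpace ℝ Y] (n : ℕ) (T : X →L[ℝ] Y) : ℝ :=
  ⨆ A : {A : Ell2 →L[ℝ] X // ‖A‖ ≤ 1}, approxNumber n (T.comp A.1)

/-- `T` is absolutely `(r,s)`-summing with constant `C`. -/
def IsAbsSumming {X Y : Type*} [NormedAddCommGroup X] [NormedSpace ℝ X]
    [NormedAddCommGroup Y] [NormedSpace ℝ Y]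
    (r s : ℝ) (T : X →L[ℝ] Y) (C : ℝ) : Prop :=
  ∀ (k : ℕ) (x : Fin k → X),
    (∑ j, ‖T (x j)‖ ^ r) ^ (1 / r) ≤
      C * ⨆ f : {f : X →L[ℝ] ℝ // ‖f‖ ≤ 1}, (∑ j, |f.1 (x j)| ^ s) ^ (1 / s)

/-- The absolutely `(r,s)`-summing norm `π_{r,s}(T)`. -/
def summingNorm {X Y : Type*} [NormedAddCommGroup X] [NormedSpace ℝ X]
    [NormedAddCommGroup Y] [NormedSpace ℝ Y] (r s : ℝ) (T : X →L[ℝ] Y) : ℝ :=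
  sInf {C : ℝ | 0 ≤ C ∧ IsAbsSumming r s T C}

open scoped RealInnerProductSpace

theorem approxNumber_le_norm_sub {X Y : Type*} [NormedAddCommGroup X] [NormedSpace ℝ X]
    [NormedAddCommGroup Y] [NormedSpace ℝ Y] {n : ℕ} (T A : X →L[ℝ] Y)
    [FiniteDimensional ℝ (LinearMap.range (A : X →ₗ[ℝ] Y))]
    (hA : Module.finrank ℝ (LinearMap.range (A : X →ₗ[ℝ] Y)) < n) :
    approxNumber n T ≤ ‖T - A‖ :=
  csInf_le ⟨0, by rintro _ ⟨B, -, -, rfl⟩; exact norm_nonneg _⟩ ⟨A, ‹_›, hA, rfl⟩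

theorem Real.card_rpow_mul_le_sum_rpow_rpow {ι : Type*} [Fintype ι] {a : ι → ℝ} {b r : ℝ}
    (hb : 0 ≤ b) (hr : 0 < r) (hba : ∀ i, b ≤ a i) :
    (Fintype.card ι : ℝ) ^ (1 / r) * b ≤ (∑ i, a i ^ r) ^ (1 / r) :=
  calc (Fintype.card ι : ℝ) ^ (1 / r) * b = (∑ _i : ι, b ^ r) ^ (1 / r) := by
        rw [Finset.sum_const, Finset.card_univ, nsmul_eq_mul, Real.mul_rpow (by positivity)
          (by positivity), one_div, Real.rpow_rpow_inv hb hr.ne']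
    _ ≤ (∑ i, a i ^ r) ^ (1 / r) := by
        gcongr with i
        exact hba i

section InnerProductSpace

variable {E : Type*} [NormedAddCommGroup E] [InnerProductSpace ℝ E]

theorem Orthonormal.snoc {k : ℕ} {e : Fin k → E} (he : Orthonormal ℝ e) {x : E}
    (hx : ‖x‖ = 1) (hex : ∀ j, ⟪e j, x⟫ = 0) :
    Orthonormal ℝ (Fin.snoc e x : Fin (k + 1) → E) := by
  rw [orthonormal_iff_ite] at he ⊢
  intro i j
  cases i using Fin.lastCases <;> cases j using Fin.lastCases <;>
    simp [hx, hex, fun j => (real_inner_comm (e j) x).trans (hex j), he, Fin.castSucc_inj,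
      (Fin.castSucc_lt_last _).ne, (Fin.castSucc_lt_last _).ne']

theorem Orthonormal.sum_sq_apply_le_sq_norm [CompleteSpace E] {ι : Type*} [Fintype ι]
    {e : ι → E} (he : Orthonormal ℝ e) (g : E →L[ℝ] ℝ) : ∑ i, g (e i) ^ 2 ≤ ‖g‖ ^ 2 := by
  set v := (InnerProductSpace.toDual ℝ E).symm g
  have hgv : ∀ i, g (e i) = ⟪e i, v⟫ := fun i => by
    rw [real_inner_comm, InnerProductSpace.toDual_symm_apply]
  calc ∑ i, g (e i) ^ 2 = ∑ i, ‖⟪e i, v⟫‖ ^ 2 := by simp [hgv]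
    _ ≤ ‖v‖ ^ 2 := he.sum_inner_products_le v
    _ = ‖g‖ ^ 2 := by rw [LinearIsometryEquiv.norm_map]

variable {Y : Type*} [NormedAddCommGroup Y] [NormedSpace ℝ Y]

theorem exists_mem_orthogonal_norm_eq_one_lt_norm_apply (S : E →L[ℝ] Y)
    (K : Submodule ℝ E) [K.HasOrthogonalProjection] {b : ℝ} (hb : 0 ≤ b)
    (hbS : b < ‖S - S ∘L K.starProjection‖) : ∃ u ∈ Kᗮ, ‖u‖ = 1 ∧ b < ‖S u‖ := by
  obtain ⟨x, hx, hbx⟩ := (S - S ∘L K.starProjection).exists_lt_apply_of_lt_opNorm hbS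
  set y := Kᗮ.starProjection x
  have hSy : (S - S ∘L K.starProjection) x = S y := by simp [y]
  rw [hSy] at hbx
  have hy : ‖y‖ ≤ 1 := (Kᗮ.norm_starProjection_apply_le x).trans hx.le
  have hy₀ : y ≠ 0 := by
    rintro hy₀
    simp only [hy₀, map_zero, norm_zero] at hbx
    linarith
  refine ⟨‖y‖⁻¹ • y, Kᗮ.smul_mem _ (Kᗮ.starProjection_apply_mem x), ?_, ?_⟩
  · rw [norm_smul, norm_inv, norm_norm, inv_mul_cancel₀ (norm_ne_zero_iff.2 hy₀)]
  rw [map_smul, norm_smul, norm_inv, norm_norm]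
  calc b < ‖S y‖ := hbx
    _ ≤ ‖y‖⁻¹ * ‖S y‖ :=
        le_mul_of_one_le_left (norm_nonneg _) ((one_le_inv₀ (norm_pos_iff.2 hy₀)).2 hy)

theorem ContinuousLinearMap.range_comp_starProjection (S : E →L[ℝ] Y) (K : Submodule ℝ E)
    [K.HasOrthogonalProjection] :
    LinearMap.range ((S ∘L K.starProjection : E →L[ℝ] Y) : E →ₗ[ℝ] Y) = K.map (S : E →ₗ[ℝ] Y) := by
  rw [ContinuousLinearMap.toLinearMap_comp, LinearMap.range_comp]
  exact congrArg _ K.range_starProjection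

theorem exists_orthonormal_lt_norm_apply_of_lt_approxNumber (S : E →L[ℝ] Y) {n : ℕ} {b : ℝ}
    (hb : 0 ≤ b) (hbS : b < approxNumber n S) :
    ∃ e : Fin n → E, Orthonormal ℝ e ∧ ∀ j, b < ‖S (e j)‖ := by
  suffices ∀ k ≤ n, ∃ e : Fin k → E, Orthonormal ℝ e ∧ ∀ j, b < ‖S (e j)‖ from this n le_rfl
  intro k hk
  induction k with
  | zero => exact ⟨Fin.elim0, orthonormal_iff_ite.2 fun i => i.elim0, fun j => j.elim0⟩
  | succ k ih =>
    obtain ⟨e, he, hSe⟩ := ih (by omega)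
    let K := Submodule.span ℝ (Set.range e)
    have : FiniteDimensional ℝ K := FiniteDimensional.span_of_finite ℝ (Set.finite_range e)
    have hK : Module.finrank ℝ K = k := by
      rw [finrank_span_eq_card he.linearIndependent, Fintype.card_fin]
    have hrange := S.range_comp_starProjection K
    have : FiniteDimensional ℝ
        (LinearMap.range ((S ∘L K.starProjection : E →L[ℝ] Y) : E →ₗ[ℝ] Y)) :=
      hrange ▸ inferInstance
    have hrank : Module.finrank ℝ
        (LinearMap.range ((S ∘L K.starProjection : E →L[ℝ] Y) : E →ₗ[ℝ] Y)) < n :=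
      hrange ▸ (Submodule.finrank_map_le _ K).trans_lt (by omega)
    obtain ⟨u, huK, hu, hSu⟩ := exists_mem_orthogonal_norm_eq_one_lt_norm_apply S K hb
      (hbS.trans_le (approxNumber_le_norm_sub S _ hrank))
    refine ⟨Fin.snoc e u, he.snoc hu fun j =>
      K.inner_right_of_mem_orthogonal (Submodule.subset_span ⟨j, rfl⟩) huK, ?_⟩
    intro j
    cases j using Fin.lastCases <;> simp [hSu, hSe]

end InnerProductSpace

section Summing

variable {E X Y : Type*} [NormedAddCommGroup E] [InnerProductSpace ℝ E] [CompleteSpace E]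
  [NormedAddCommGroup X] [NormedSpace ℝ X] [NormedAddCommGroup Y] [NormedSpace ℝ Y]

theorem iSup_sum_sq_apply_comp_orthonormal_le_one {ι : Type*} [Fintype ι] {A : E →L[ℝ] X}
    (hA : ‖A‖ ≤ 1) {e : ι → E} (he : Orthonormal ℝ e) :
    ⨆ f : {f : X →L[ℝ] ℝ // ‖f‖ ≤ 1}, (∑ i, |f.1 (A (e i))| ^ (2 : ℝ)) ^ (1 / (2 : ℝ)) ≤ 1 := by
  have : Nonempty {f : X →L[ℝ] ℝ // ‖f‖ ≤ 1} := ⟨⟨0, by simp⟩⟩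
  refine ciSup_le fun f => Real.rpow_le_one (by positivity) ?_ (by norm_num)
  have hfA : ‖f.1 ∘L A‖ ≤ 1 :=
    (ContinuousLinearMap.opNorm_comp_le _ _).trans (mul_le_one₀ f.2 (norm_nonneg _) hA)
  calc ∑ i, |f.1 (A (e i))| ^ (2 : ℝ) = ∑ i, (f.1 ∘L A) (e i) ^ 2 := by simp
    _ ≤ ‖f.1 ∘L A‖ ^ 2 := he.sum_sq_apply_le_sq_norm _
    _ ≤ 1 := pow_le_one₀ (norm_nonneg _) hfA

theorem IsAbsSumming.rpow_mul_approxNumber_comp_le {r C : ℝ} {T : X →L[ℝ] Y}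
    (hT : IsAbsSumming r 2 T C) (hr : 0 < r) (hC : 0 ≤ C) {n : ℕ} (hn : 0 < n)
    {A : E →L[ℝ] X} (hA : ‖A‖ ≤ 1) : (n : ℝ) ^ (1 / r) * approxNumber n (T ∘L A) ≤ C := by
  have hn' : 0 < (n : ℝ) ^ (1 / r) := by positivity
  rw [← le_div_iff₀' hn']
  refine le_of_forall_lt_imp_le_of_dense fun b hb => ?_
  rcases lt_or_ge b 0 with hb₀ | hb₀
  · exact hb₀.le.trans (by positivity)
  obtain ⟨e, he, hTe⟩ := exists_orthonormal_lt_norm_apply_of_lt_approxNumber (T ∘L A) hb₀ hb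
  rw [le_div_iff₀' hn']
  calc (n : ℝ) ^ (1 / r) * b ≤ (∑ j, ‖T (A (e j))‖ ^ r) ^ (1 / r) := by
        simpa using Real.card_rpow_mul_le_sum_rpow_rpow hb₀ hr fun j => (hTe j).le
    _ ≤ C * ⨆ f : {f : X →L[ℝ] ℝ // ‖f‖ ≤ 1}, (∑ j, |f.1 (A (e j))| ^ (2 : ℝ)) ^ (1 / (2 : ℝ)) :=
        hT n fun j => A (e j)
    _ ≤ C * 1 := by gcongr; exact iSup_sum_sq_apply_comp_orthonormal_le_one hA he
    _ = C := mul_one C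

end Summing

theorem weyl_le_summing_general
    {X Y : Type*} [NormedAddCommGroup X] [NormedSpace ℝ X]
    [NormedAddCommGroup Y] [NormedSpace ℝ Y]
    (r : ℝ) (hr : 2 ≤ r) (T : X →L[ℝ] Y)
    (hT : ∃ C : ℝ, 0 ≤ C ∧ IsAbsSumming r 2 T C)
    (n : ℕ) (hn : 1 ≤ n) :
    weylNumber n T ≤ (n : ℝ) ^ (-(1 / r)) * summingNorm r 2 T := by
  have hn₀ : (0 : ℝ) < n := by exact_mod_cast hn
  have : Nonempty {A : Ell2 →L[ℝ] X // ‖A‖ ≤ 1} := ⟨⟨0, by simp⟩⟩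
  refine ciSup_le fun A => ?_
  have h : (n : ℝ) ^ (1 / r) * approxNumber n (T ∘L A.1) ≤ summingNorm r 2 T :=
    le_csInf hT fun C ⟨hC, hTC⟩ =>
      hTC.rpow_mul_approxNumber_comp_le (by linarith) hC (by omega) A.2
  rwa [Real.rpow_neg hn₀.le, inv_mul_eq_div, le_div_iff₀' (by positivity)]

/-- If `2 ≤ r < ∞` and `T : X → Y` is absolutely `(r,2)`-summing, then
`x_n(T) ≤ n^{-1/r} · π_{r,2}(T)` for all `n ≥ 1`. -/
theorem weyl_le_summing
    {X Y : Type*} [NormedAddCommGroup X] [NormedSpace ℝ X] [CompleteSpace X]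
    [NormedAddCommGroup Y] [NormedSpace ℝ Y] [CompleteSpace Y]
    (r : ℝ) (hr : 2 ≤ r) (T : X →L[ℝ] Y)
    (hT : ∃ C : ℝ, 0 ≤ C ∧ IsAbsSumming r 2 T C)
    (n : ℕ) (hn : 1 ≤ n) :
    weylNumber n T ≤ (n : ℝ) ^ (-(1 / r)) * summingNorm r 2 T :=
  weyl_le_summing_general r hr T hT n hn
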